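/- arXiv:1909.03492 — 5 statements merged into one kernel-verified Lean document; each statement's English description precedes it below -/
import Mathlib

section
/- Let T : C → C be a (b, k)-enriched strictly pseudocontractive mapping, λ = 1/(b + 1), and 0 < t < 1 − k. Then the mapping x ↦ (1 − λt)x + λt·Tx is nonexpansive on C. -/
/-!
Writing `λ = 1/(b+1)`, so that `λ b = 1 - λ`, and dividing the defining inequality by `(b+1)²`
shows that the averaged map `S = (1 - λ) I + λ T` is a `k`-strict pseudocontraction in the sense
of Browder–Petryshyn. The map of the theorem is `(1 - t) I + t S`, and the Hilbert-space identity
`‖(1 - t) u + t w‖² = (1 - t)‖u‖² + t‖w‖² - t(1 - t)‖u - w‖²` shows that such a relaxation of a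
`k`-strict pseudocontraction loses `t(1 - t - k)‖u - w‖² ≥ 0`, hence is nonexpansive.
-/

section StrictPseudocontraction

variable {H : Type*} [NormedAddCommGroup H] [InnerProductSpace ℝ H]

def IsStrictPseudocontractiveOn (k : ℝ) (S : H → H) (C : Set H) : Prop :=
  ∀ x ∈ C, ∀ y ∈ C, ‖S x - S y‖ ^ 2 ≤ ‖x - y‖ ^ 2 + k * ‖x - y - (S x - S y)‖ ^ 2

def IsEnrichedStrictPseudocontractiveOn (b k : ℝ) (T : H → H) (C : Set H) : Prop :=
  ∀ x ∈ C, ∀ y ∈ C,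
    ‖b • (x - y) + (T x - T y)‖ ^ 2 ≤ (b + 1) ^ 2 * ‖x - y‖ ^ 2 + k * ‖x - y - (T x - T y)‖ ^ 2

theorem norm_one_sub_smul_add_smul_sq (t : ℝ) (u w : H) :
    ‖(1 - t) • u + t • w‖ ^ 2 =
      (1 - t) * ‖u‖ ^ 2 + t * ‖w‖ ^ 2 - t * (1 - t) * ‖u - w‖ ^ 2 := by
  rw [norm_add_sq_real, norm_sub_sq_real, norm_smul, norm_smul, real_inner_smul_left,
    real_inner_smul_right, Real.norm_eq_abs, Real.norm_eq_abs, mul_pow, mul_pow, sq_abs, sq_abs]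
  ring

theorem norm_one_sub_smul_add_smul_le {k t : ℝ} (ht0 : 0 ≤ t) (ht1 : t ≤ 1 - k) {u w : H}
    (huw : ‖w‖ ^ 2 ≤ ‖u‖ ^ 2 + k * ‖u - w‖ ^ 2) :
    ‖(1 - t) • u + t • w‖ ≤ ‖u‖ := by
  have hloss : 0 ≤ t * (1 - t - k) * ‖u - w‖ ^ 2 :=
    mul_nonneg (mul_nonneg ht0 (by linarith)) (sq_nonneg _)
  have hsq : ‖(1 - t) • u + t • w‖ ^ 2 ≤ ‖u‖ ^ 2 := by
    rw [norm_one_sub_smul_add_smul_sq]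
    linarith [mul_le_mul_of_nonneg_left huw ht0]
  exact pow_le_pow_iff_left₀ (norm_nonneg _) (norm_nonneg _) two_ne_zero |>.mp hsq

theorem IsStrictPseudocontractiveOn.norm_relaxation_sub_le {k t : ℝ} {S : H → H} {C : Set H}
    (hS : IsStrictPseudocontractiveOn k S C) (ht0 : 0 ≤ t) (ht1 : t ≤ 1 - k) :
    ∀ x ∈ C, ∀ y ∈ C,
      ‖((1 - t) • x + t • S x) - ((1 - t) • y + t • S y)‖ ≤ ‖x - y‖ := by
  intro x hx y hy
  have hdiff : ((1 - t) • x + t • S x) - ((1 - t) • y + t • S y)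
      = (1 - t) • (x - y) + t • (S x - S y) := by
    module
  rw [hdiff]
  exact norm_one_sub_smul_add_smul_le ht0 ht1 (hS x hx y hy)

theorem IsEnrichedStrictPseudocontractiveOn.isStrictPseudocontractiveOn_averaged
    {b k lam : ℝ} {T : H → H} {C : Set H} (hT : IsEnrichedStrictPseudocontractiveOn b k T C)
    (hlam : lam * (b + 1) = 1) :
    IsStrictPseudocontractiveOn k (fun x ↦ (1 - lam) • x + lam • T x) C := by
  intro x hx y hy
  have hdiff : ((1 - lam) • x + lam • T x) - ((1 - lam) • y + lam • T y)
      = lam • (b • (x - y) + (T x - T y)) := by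
    linear_combination (norm := module) hlam • (y - x)
  have hres : x - y - (((1 - lam) • x + lam • T x) - ((1 - lam) • y + lam • T y))
      = lam • (x - y - (T x - T y)) := by
    module
  rw [hres, hdiff, norm_smul, norm_smul, mul_pow, mul_pow, Real.norm_eq_abs, sq_abs]
  calc lam ^ 2 * ‖b • (x - y) + (T x - T y)‖ ^ 2
      ≤ lam ^ 2 * ((b + 1) ^ 2 * ‖x - y‖ ^ 2 + k * ‖x - y - (T x - T y)‖ ^ 2) := by
        gcongr; exact hT x hx y hy
    _ = ‖x - y‖ ^ 2 + k * (lam ^ 2 * ‖x - y - (T x - T y)‖ ^ 2) := by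
        linear_combination (lam * (b + 1) + 1) * ‖x - y‖ ^ 2 * hlam

end StrictPseudocontraction

theorem enriched_averaged_nonexpansive_general
    {H : Type*} [NormedAddCommGroup H] [InnerProductSpace ℝ H]
    (C : Set H) (T : H → H)
    (b k : ℝ) (hb : 0 ≤ b)
    (hespc : ∀ x ∈ C, ∀ y ∈ C,
      ‖b • (x - y) + (T x - T y)‖ ^ 2 ≤
        (b + 1) ^ 2 * ‖x - y‖ ^ 2 + k * ‖x - y - (T x - T y)‖ ^ 2)
    (lam : ℝ) (hlam : lam = 1 / (b + 1))
    (t : ℝ) (ht0 : 0 < t) (ht1 : t < 1 - k) :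
    ∀ x ∈ C, ∀ y ∈ C,
      ‖((1 - lam * t) • x + (lam * t) • T x) - ((1 - lam * t) • y + (lam * t) • T y)‖
        ≤ ‖x - y‖ := by
  have hlam_mul : lam * (b + 1) = 1 := by
    rw [hlam, one_div_mul_cancel (by positivity)]
  have hS := IsEnrichedStrictPseudocontractiveOn.isStrictPseudocontractiveOn_averaged
    hespc hlam_mul
  have hmap : ∀ z, (1 - lam * t) • z + (lam * t) • T z
      = (1 - t) • z + t • ((1 - lam) • z + lam • T z) := fun z ↦ by module
  simpa only [hmap] using hS.norm_relaxation_sub_le ht0.le ht1.le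

theorem enriched_averaged_nonexpansive
    {H : Type*} [NormedAddCommGroup H] [InnerProductSpace ℝ H] [CompleteSpace H]
    (C : Set H) (hC : Convex ℝ C) (T : H → H) (hT : Set.MapsTo T C C)
    (b k : ℝ) (hb : 0 ≤ b) (hk0 : 0 ≤ k) (hk1 : k < 1)
    (hespc : ∀ x ∈ C, ∀ y ∈ C,
      ‖b • (x - y) + (T x - T y)‖ ^ 2 ≤
        (b + 1) ^ 2 * ‖x - y‖ ^ 2 + k * ‖x - y - (T x - T y)‖ ^ 2)
    (lam : ℝ) (hlam : lam = 1 / (b + 1))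
    (t : ℝ) (ht0 : 0 < t) (ht1 : t < 1 - k) :
    ∀ x ∈ C, ∀ y ∈ C,
      ‖((1 - lam * t) • x + (lam * t) • T x) - ((1 - lam * t) • y + (lam * t) • T y)‖
        ≤ ‖x - y‖ :=
  enriched_averaged_nonexpansive_general C T b k hb hespc lam hlam t ht0 ht1
end

section
/- Let T : C → C be k-strictly pseudocontractive on a closed convex subset C of a Hilbert space H. If {x_n} ⊆ C converges weakly to x̄ and (I − T)x_n → 0 strongly, then T x̄ = x̄ (i.e., I − T is demiclosed at 0). -/
open Filter
open scoped RealInnerProductSpace Topology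

theorem demiclosedness_principle
    {H : Type*} [NormedAddCommGroup H] [InnerProductSpace ℝ H] [CompleteSpace H]
    (C : Set H) (hCc : IsClosed C) (hC : Convex ℝ C)
    (T : H → H) (hT : Set.MapsTo T C C)
    (k : ℝ) (hk0 : 0 ≤ k) (hk1 : k < 1)
    (hspc : ∀ x ∈ C, ∀ y ∈ C,
      ‖T x - T y‖ ^ 2 ≤ ‖x - y‖ ^ 2 + k * ‖x - y - (T x - T y)‖ ^ 2)
    (x : ℕ → H) (hx : ∀ n, x n ∈ C) (xbar : H)
    (hw : ∀ w : H, Tendsto (fun n => ⟪x n, w⟫) atTop (𝓝 ⟪xbar, w⟫))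
    (hres : Tendsto (fun n => x n - T (x n)) atTop (𝓝 0)) :
    T xbar = xbar := by
  -- Step 1: xbar ∈ C
  have hxbar : xbar ∈ C := by
    by_contra hnot
    obtain ⟨f, u, hfu, huf⟩ := geometric_hahn_banach_closed_point hC hCc hnot
    set w := (InnerProductSpace.toDual ℝ H).symm f with hwdef
    have hfw : ∀ y : H, f y = ⟪y, w⟫ := by
      intro y
      rw [real_inner_comm]
      have : InnerProductSpace.toDual ℝ H w = f := by
        simp [hwdef]
      rw [← this]
      simp [InnerProductSpace.toDual_apply_apply]
    have hto : Tendsto (fun n => f (x n)) atTop (𝓝 (f xbar)) := by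
      simpa [hfw] using hw w
    have hle : f xbar ≤ u :=
      le_of_tendsto hto (Eventually.of_forall fun n => (hfu (x n) (hx n)).le)
    exact absurd (lt_of_lt_of_le huf hle) (lt_irrefl _)
  -- Step 2: the sequence x is bounded
  have hbdd : ∃ M : ℝ, ∀ n, ‖x n‖ ≤ M := by
    obtain ⟨M, hM⟩ := banach_steinhaus
      (g := fun n => (InnerProductSpace.toDual ℝ H (x n) : H →L[ℝ] ℝ))
      (fun w => by
        obtain ⟨c, hc⟩ := (Metric.isBounded_range_of_tendsto _ (hw w)).exists_norm_le
        exact ⟨c, fun n => by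
          simpa [InnerProductSpace.toDual_apply_apply, real_inner_comm] using
            hc _ (Set.mem_range_self n)⟩)
    exact ⟨M, fun n => by simpa using hM n⟩
  obtain ⟨M, hM⟩ := hbdd
  set v := xbar - T xbar with hv
  set u : ℕ → H := fun n => x n - T (x n) with hu
  -- Step 3: key inequality from strict pseudocontractivity
  have key : ∀ n, (1 - k) / 2 * ‖u n - v‖ ^ 2 ≤ ⟪x n - xbar, u n - v⟫ := by
    intro n
    have h := hspc (x n) (hx n) xbar hxbar
    have hid : T (x n) - T xbar = (x n - xbar) - (u n - v) := by
      simp only [hu, hv]; abel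
    have hid2 : x n - xbar - (T (x n) - T xbar) = u n - v := by
      simp only [hu, hv]; abel
    rw [hid2] at h
    rw [hid, norm_sub_sq_real] at h
    nlinarith [h]
  -- Step 4: limits
  have h1 : Tendsto (fun n => ⟪x n - xbar, u n - v⟫) atTop (𝓝 0) := by
    have ha : Tendsto (fun n => ⟪x n - xbar, u n⟫) atTop (𝓝 0) := by
      have hnorm : Tendsto (fun n => ‖u n‖) atTop (𝓝 0) := by
        simpa using hres.norm
      have hb : Tendsto (fun n => (M + ‖xbar‖) * ‖u n‖) atTop (𝓝 0) := by
        simpa using hnorm.const_mul (M + ‖xbar‖)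
      apply squeeze_zero_norm _ hb
      intro n
      calc ‖⟪x n - xbar, u n⟫‖ ≤ ‖x n - xbar‖ * ‖u n‖ := norm_inner_le_norm _ _
        _ ≤ (M + ‖xbar‖) * ‖u n‖ := by
            apply mul_le_mul_of_nonneg_right _ (norm_nonneg _)
            calc ‖x n - xbar‖ ≤ ‖x n‖ + ‖xbar‖ := norm_sub_le _ _
              _ ≤ M + ‖xbar‖ := by linarith [hM n]
    have hb2 : Tendsto (fun n => ⟪x n - xbar, v⟫) atTop (𝓝 0) := by
      have := (hw v).sub_const ⟪xbar, v⟫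
      simpa [inner_sub_left] using this
    have := ha.sub hb2
    simpa [inner_sub_right] using this
  have h2 : Tendsto (fun n => (1 - k) / 2 * ‖u n - v‖ ^ 2) atTop
      (𝓝 ((1 - k) / 2 * ‖v‖ ^ 2)) := by
    have : Tendsto (fun n => u n - v) atTop (𝓝 (0 - v)) := hres.sub_const v
    have hn : Tendsto (fun n => ‖u n - v‖ ^ 2) atTop (𝓝 (‖v‖ ^ 2)) := by
      have := (this.norm.pow 2)
      simpa using this
    exact hn.const_mul _
  have hfin : (1 - k) / 2 * ‖v‖ ^ 2 ≤ 0 :=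
    le_of_tendsto_of_tendsto' h2 h1 key
  have hv0 : v = 0 := by
    have hkpos : 0 < (1 - k) / 2 := by linarith
    have hsq : ‖v‖ ^ 2 ≤ 0 := by nlinarith
    have : ‖v‖ = 0 := by nlinarith [norm_nonneg v]
    exact norm_eq_zero.mp this
  have hz : xbar - T xbar = 0 := hv0
  exact (sub_eq_zero.mp hz).symm
end

section
/- Let T : C → C be k-strictly pseudocontractive with fixed point p, and let α ∈ (k, 1). Then for any x ∈ C, setting x' = α x + (1 − α) T x, one has ‖x' − p‖² ≤ ‖x − p‖² − (α − k)(1 − α)‖x − T x‖². In particular ‖x' − p‖ ≤ ‖x − p‖. -/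
/-!
Put `u = x - p` and `v = T x - p`, so that `x' - p = α • u + (1 - α) • v` and `x - T x = u - v`.
In a real inner product space the convex-combination identity
`‖α • u + (1 - α) • v‖² = α ‖u‖² + (1 - α) ‖v‖² - α (1 - α) ‖u - v‖²`
holds, and strict pseudocontractivity at the fixed point `p` gives `‖v‖² ≤ ‖u‖² + k ‖u - v‖²`.
Substituting the second into the first yields the estimate, whose correction term is
nonnegative for `k < α < 1`.
-/

section

variable {E : Type*} [NormedAddCommGroup E] [InnerProductSpace ℝ E]

theorem norm_smul_add_one_sub_smul_sq (a : ℝ) (u v : E) :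
    ‖a • u + (1 - a) • v‖ ^ 2 =
      a * ‖u‖ ^ 2 + (1 - a) * ‖v‖ ^ 2 - a * (1 - a) * ‖u - v‖ ^ 2 := by
  simp only [← real_inner_self_eq_norm_sq, inner_add_left, inner_add_right, inner_sub_left,
    inner_sub_right, real_inner_smul_left, real_inner_smul_right, real_inner_comm u v]
  ring

theorem norm_smul_add_one_sub_smul_sq_le {a k : ℝ} {u v : E} (ha : a ≤ 1)
    (hvu : ‖v‖ ^ 2 ≤ ‖u‖ ^ 2 + k * ‖u - v‖ ^ 2) :
    ‖a • u + (1 - a) • v‖ ^ 2 ≤ ‖u‖ ^ 2 - (a - k) * (1 - a) * ‖u - v‖ ^ 2 := by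
  rw [norm_smul_add_one_sub_smul_sq]
  nlinarith [mul_le_mul_of_nonneg_left hvu (sub_nonneg.2 ha)]

end

theorem mann_step_fejer_general
    {H : Type*} [NormedAddCommGroup H] [InnerProductSpace ℝ H]
    (C : Set H) (T : H → H)
    (k : ℝ)
    (hspc : ∀ x ∈ C, ∀ y ∈ C,
      ‖T x - T y‖ ^ 2 ≤ ‖x - y‖ ^ 2 + k * ‖x - y - (T x - T y)‖ ^ 2)
    (p : H) (hp : p ∈ C) (hfix : T p = p)
    (α : ℝ) (hαk : k < α) (hα1 : α < 1)
    (x : H) (hx : x ∈ C) (x' : H) (hx' : x' = α • x + (1 - α) • T x) :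
    ‖x' - p‖ ^ 2 ≤ ‖x - p‖ ^ 2 - (α - k) * (1 - α) * ‖x - T x‖ ^ 2 ∧
      ‖x' - p‖ ≤ ‖x - p‖ := by
  have hstep : x' - p = α • (x - p) + (1 - α) • (T x - p) := by
    rw [hx']
    module
  have hres : x - T x = x - p - (T x - p) := by abel
  have hpc := hspc x hx p hp
  rw [hfix] at hpc
  have hsq : ‖x' - p‖ ^ 2 ≤ ‖x - p‖ ^ 2 - (α - k) * (1 - α) * ‖x - T x‖ ^ 2 := by
    rw [hstep, hres]
    exact norm_smul_add_one_sub_smul_sq_le hα1.le hpc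
  have hcorr : 0 ≤ (α - k) * (1 - α) * ‖x - T x‖ ^ 2 :=
    mul_nonneg (mul_nonneg (sub_nonneg.2 hαk.le) (sub_nonneg.2 hα1.le)) (sq_nonneg _)
  exact ⟨hsq, (sq_le_sq₀ (norm_nonneg _) (norm_nonneg _)).1 (by linarith)⟩

theorem mann_step_fejer
    {H : Type*} [NormedAddCommGroup H] [InnerProductSpace ℝ H] [CompleteSpace H]
    (C : Set H) (hC : Convex ℝ C) (T : H → H) (hT : Set.MapsTo T C C)
    (k : ℝ) (hk0 : 0 ≤ k) (hk1 : k < 1)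
    (hspc : ∀ x ∈ C, ∀ y ∈ C,
      ‖T x - T y‖ ^ 2 ≤ ‖x - y‖ ^ 2 + k * ‖x - y - (T x - T y)‖ ^ 2)
    (p : H) (hp : p ∈ C) (hfix : T p = p)
    (α : ℝ) (hαk : k < α) (hα1 : α < 1)
    (x : H) (hx : x ∈ C) (x' : H) (hx' : x' = α • x + (1 - α) • T x) :
    ‖x' - p‖ ^ 2 ≤ ‖x - p‖ ^ 2 - (α - k) * (1 - α) * ‖x - T x‖ ^ 2 ∧
      ‖x' - p‖ ≤ ‖x - p‖ :=
  mann_step_fejer_general C T k hspc p hp hfix α hαk hα1 x hx x' hx'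
end

section
/- Let T : C → C be k-strictly pseudocontractive, α ∈ (k, 1), x ∈ C, and x' = α x + (1 − α) T x. Then ‖x' − T x'‖ ≤ ‖x − T x‖, i.e., the residual sequence of the Mann iteration with constant parameter in (k, 1) is decreasing. -/
/-!
Write `S = I - T`. Expanding `‖Tx - Ty‖² = ‖(x - y) - (Sx - Sy)‖²` turns strict pseudocontractivity
into the monotonicity estimate `(1 - k)‖Sx - Sy‖² ≤ 2⟪Sx - Sy, x - y⟫`. For `y = x'` we have
`x - x' = (1 - α) Sx`, and bounding `2⟪Sx, Sx'⟫ ≤ ‖Sx‖² + ‖Sx'‖²` (with weight `α - k ≥ 0`) leaves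
`(1 - α)‖Sx'‖² ≤ (1 - α)‖Sx‖²`.
-/

section StrictPseudocontraction

variable {H : Type*} [NormedAddCommGroup H] [InnerProductSpace ℝ H]

theorem two_inner_residual_ge_of_strictPseudocontractive {x y p q : H} {k : ℝ}
    (h : ‖p - q‖ ^ 2 ≤ ‖x - y‖ ^ 2 + k * ‖x - y - (p - q)‖ ^ 2) :
    (1 - k) * ‖(x - p) - (y - q)‖ ^ 2 ≤ 2 * inner ℝ ((x - p) - (y - q)) (x - y) := by
  have hres : (x - p) - (y - q) = x - y - (p - q) := by abel
  have hexp : ‖p - q‖ ^ 2 =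
      ‖x - y‖ ^ 2 - 2 * inner ℝ (x - y - (p - q)) (x - y) + ‖x - y - (p - q)‖ ^ 2 := by
    rw [real_inner_comm, ← norm_sub_sq_real, sub_sub_cancel]
  rw [hres]
  linarith

theorem norm_le_of_two_inner_sub_ge {a b : H} {k α : ℝ} (hkα : k ≤ α) (hα1 : α < 1)
    (h : (1 - k) * ‖a - b‖ ^ 2 ≤ (1 - α) * (2 * inner ℝ (a - b) a)) :
    ‖b‖ ≤ ‖a‖ := by
  have hab : 2 * inner ℝ a b ≤ ‖a‖ ^ 2 + ‖b‖ ^ 2 := by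
    nlinarith [real_inner_le_norm a b, sq_nonneg (‖a‖ - ‖b‖)]
  rw [norm_sub_sq_real, inner_sub_left, real_inner_self_eq_norm_sq] at h
  have hsq : (1 - α) * ‖b‖ ^ 2 ≤ (1 - α) * ‖a‖ ^ 2 := by
    nlinarith [mul_le_mul_of_nonneg_left hab (sub_nonneg.mpr hkα), real_inner_comm a b]
  exact (pow_le_pow_iff_left₀ (norm_nonneg b) (norm_nonneg a) two_ne_zero).mp
    (le_of_mul_le_mul_left hsq (sub_pos.mpr hα1))

end StrictPseudocontraction

theorem mann_residual_decreasing_general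
    {H : Type*} [NormedAddCommGroup H] [InnerProductSpace ℝ H]
    (C : Set H) (hC : Convex ℝ C) (T : H → H) (hT : Set.MapsTo T C C)
    (k : ℝ) (hk0 : 0 ≤ k)
    (hspc : ∀ x ∈ C, ∀ y ∈ C,
      ‖T x - T y‖ ^ 2 ≤ ‖x - y‖ ^ 2 + k * ‖x - y - (T x - T y)‖ ^ 2)
    (α : ℝ) (hαk : k < α) (hα1 : α < 1)
    (x : H) (hx : x ∈ C) (x' : H) (hx' : x' = α • x + (1 - α) • T x) :
    ‖x' - T x'‖ ≤ ‖x - T x‖ := by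
  have hx'C : x' ∈ C := hx' ▸ hC hx (hT hx) (by linarith) (by linarith) (by ring)
  have hstep : x - x' = (1 - α) • (x - T x) := by rw [hx']; module
  have hmono := two_inner_residual_ge_of_strictPseudocontractive (hspc x hx x' hx'C)
  rw [hstep, real_inner_smul_right, mul_left_comm] at hmono
  exact norm_le_of_two_inner_sub_ge hαk.le hα1 hmono

theorem mann_residual_decreasing
    {H : Type*} [NormedAddCommGroup H] [InnerProductSpace ℝ H] [CompleteSpace H]
    (C : Set H) (hC : Convex ℝ C) (T : H → H) (hT : Set.MapsTo T C C)
    (k : ℝ) (hk0 : 0 ≤ k) (hk1 : k < 1)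
    (hspc : ∀ x ∈ C, ∀ y ∈ C,
      ‖T x - T y‖ ^ 2 ≤ ‖x - y‖ ^ 2 + k * ‖x - y - (T x - T y)‖ ^ 2)
    (α : ℝ) (hαk : k < α) (hα1 : α < 1)
    (x : H) (hx : x ∈ C) (x' : H) (hx' : x' = α • x + (1 - α) • T x) :
    ‖x' - T x'‖ ≤ ‖x - T x‖ :=
  mann_residual_decreasing_general C hC T hT k hk0 hspc α hαk hα1 x hx x' hx'
end

section
/- Let C be a bounded closed convex subset of a Hilbert space H and T : C → C a (b, k)-enriched strictly pseudocontractive mapping. Then T has a fixed point in C, and for any x_0 ∈ C and any γ with 0 < γ < 1 − k, the Krasnoselskij iteration x_{n+1} = (1 − γ)x_n + γ T x_n converges weakly to a fixed point of T. -/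
/-!
Writing `A = I - T`, the enriched condition expands to `(1 - k) ‖A x - A y‖² ≤
2 (b + 1) ⟪x - y, A x - A y⟫`, which says exactly that `T` is a `κ`-strict pseudocontraction
with `κ = (b + k) / (b + 1) < 1`; note `γ = μ t / (b + 1) < (1 - k) / (b + 1) = 1 - κ`.
For `0 < γ ≤ 1 - κ` the averaged map `V = (1 - γ) I + γ T` is nonexpansive on `C` and has the
same fixed points as `T`, and at a fixed point `p` it satisfies
`‖V x - p‖² ≤ ‖x - p‖² - γ (1 - κ - γ) ‖x - T x‖²` when `γ < 1 - κ`.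

In a Hilbert space a bounded closed convex set is weakly compact (Banach–Alaoglu through the
Riesz isomorphism) and nonexpansive maps are demiclosed. Together these give Browder's fixed
point theorem, hence a fixed point of `V`, i.e. of `T`. The Krasnoselskij iterates are Fejér
monotone with respect to `Fix T` and, by the displayed inequality, `‖xₙ - T xₙ‖ → 0`; so all
their weak cluster points lie in `Fix T` by demiclosedness, and Opial's argument shows that two
such cluster points coincide. Weak convergence is expressed through `toWeakSpace ℝ H`.
-/

open Filter Set Function
open scoped RealInnerProductSpace Topology

lemma tendsto_zero_of_add_mul_le {a r : ℕ → ℝ} {c : ℝ} (hc : 0 < c) (ha : ∀ n, 0 ≤ a n)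
    (hr : ∀ n, 0 ≤ r n) (h : ∀ n, a (n + 1) + c * r n ≤ a n) : Tendsto r atTop (𝓝 0) := by
  have hanti : Antitone a := antitone_nat_of_succ_le fun n => by nlinarith [h n, hr n]
  have hlim := tendsto_atTop_ciInf hanti ⟨0, by rintro _ ⟨n, rfl⟩; exact ha n⟩
  refine squeeze_zero (g := fun n => (a n - a (n + 1)) / c) hr
    (fun n => (le_div_iff₀' hc).2 (by linarith [h n])) ?_
  simpa using (hlim.sub (hlim.comp (tendsto_add_atTop_nat 1))).div_const c

section

variable {H : Type*} [NormedAddCommGroup H] [InnerProductSpace ℝ H]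

lemma continuous_inner_toWeakSpace_symm (w : H) :
    Continuous fun v : WeakSpace ℝ H => ⟪(toWeakSpace ℝ H).symm v, w⟫ := by
  have h : (fun v : WeakSpace ℝ H => ⟪(toWeakSpace ℝ H).symm v, w⟫) =
      fun v => (topDualPairing ℝ H).flip v (innerSL ℝ w) :=
    funext fun _ => real_inner_comm _ _
  rw [h]
  exact WeakBilin.eval_continuous _ _

lemma tendsto_inner_of_tendsto_toWeakSpace {ι : Type*} {l : Filter ι} {x : ι → H} {q : H}
    (h : Tendsto (fun i => toWeakSpace ℝ H (x i)) l (𝓝 (toWeakSpace ℝ H q))) (w : H) :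
    Tendsto (fun i => ⟪x i, w⟫) l (𝓝 ⟪q, w⟫) :=
  ((continuous_inner_toWeakSpace_symm w).tendsto _).comp h

lemma inner_eq_of_mapClusterPt_of_tendsto {ι : Type*} {l : Filter ι} {x : ι → H} {r w : H}
    {L : ℝ} (hr : MapClusterPt (toWeakSpace ℝ H r) l fun i => toWeakSpace ℝ H (x i))
    (hL : Tendsto (fun i => ⟪x i, w⟫) l (𝓝 L)) : ⟪r, w⟫ = L := by
  obtain ⟨U, hUl, hU⟩ := mapClusterPt_iff_ultrafilter.1 hr
  exact tendsto_nhds_unique (tendsto_inner_of_tendsto_toWeakSpace hU w) (hL.mono_left hUl)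

lemma Convex.isClosed_toWeakSpace_image {C : Set H} (hC : Convex ℝ C) (hCc : IsClosed C) :
    IsClosed (toWeakSpace ℝ H '' C) := by
  rw [← closure_eq_iff_isClosed, ← hC.toWeakSpace_closure ℝ, hCc.closure_eq]

lemma eq_of_mapClusterPt_of_tendsto_norm_sub {ι : Type*} {l : Filter ι} {x : ι → H}
    {p q : H} {a b : ℝ} (ha : Tendsto (fun i => ‖x i - p‖) l (𝓝 a))
    (hb : Tendsto (fun i => ‖x i - q‖) l (𝓝 b))
    (hp : MapClusterPt (toWeakSpace ℝ H p) l fun i => toWeakSpace ℝ H (x i))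
    (hq : MapClusterPt (toWeakSpace ℝ H q) l fun i => toWeakSpace ℝ H (x i)) : p = q := by
  have hpol : ∀ y : H, ⟪y, p - q⟫ = (‖y - q‖ ^ 2 - ‖y - p‖ ^ 2 + ‖p‖ ^ 2 - ‖q‖ ^ 2) / 2 := by
    intro y
    rw [norm_sub_sq_real, norm_sub_sq_real, inner_sub_right]
    ring
  have hL : Tendsto (fun i => ⟪x i, p - q⟫) l
      (𝓝 ((b ^ 2 - a ^ 2 + ‖p‖ ^ 2 - ‖q‖ ^ 2) / 2)) := by
    simp_rw [hpol]
    exact ((((hb.pow 2).sub (ha.pow 2)).add_const _).sub_const _).div_const _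
  have h : ⟪p - q, p - q⟫ = 0 := by
    rw [inner_sub_left, inner_eq_of_mapClusterPt_of_tendsto hp hL,
      inner_eq_of_mapClusterPt_of_tendsto hq hL, sub_self]
  exact sub_eq_zero.1 (inner_self_eq_zero.1 h)

/-- Opial's lemma. -/
theorem exists_tendsto_toWeakSpace_of_antitone_norm_sub {C S : Set H}
    (hK : IsCompact (toWeakSpace ℝ H '' C)) {x : ℕ → H} (hx : ∀ n, x n ∈ C)
    (hfejer : ∀ q ∈ S, Antitone fun n => ‖x n - q‖)
    (hclust : ∀ p, (MapClusterPt (toWeakSpace ℝ H p) atTop fun n => toWeakSpace ℝ H (x n)) →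
      p ∈ S) :
    ∃ q ∈ S, Tendsto (fun n => toWeakSpace ℝ H (x n)) atTop (𝓝 (toWeakSpace ℝ H q)) := by
  have hmem : ∀ᶠ n in atTop, toWeakSpace ℝ H (x n) ∈ toWeakSpace ℝ H '' C :=
    Eventually.of_forall fun n => mem_image_of_mem _ (hx n)
  have hconv : ∀ q ∈ S, ∃ a, Tendsto (fun n => ‖x n - q‖) atTop (𝓝 a) := fun q hq =>
    ⟨_, tendsto_atTop_ciInf (hfejer q hq) ⟨0, by rintro _ ⟨n, rfl⟩; positivity⟩⟩
  obtain ⟨_, ⟨q, -, rfl⟩, hq⟩ := hK.exists_mapClusterPt (tendsto_principal.2 hmem)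
  have hqS := hclust q hq
  obtain ⟨b, hb⟩ := hconv q hqS
  refine ⟨q, hqS, hK.tendsto_nhds_of_unique_mapClusterPt hmem ?_⟩
  rintro _ ⟨p, -, rfl⟩ hp
  obtain ⟨a, ha⟩ := hconv p (hclust p hp)
  rw [eq_of_mapClusterPt_of_tendsto_norm_sub ha hb hp hq]

/-- The demiclosedness principle. -/
lemma LipschitzOnWith.isFixedPt_of_tendsto_toWeakSpace {ι : Type*} {l : Filter ι} [l.NeBot]
    {V : H → H} {C : Set H} (hV : LipschitzOnWith 1 V C) (hCb : Bornology.IsBounded C)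
    {y : ι → H} (hy : ∀ i, y i ∈ C) {p : H} (hp : p ∈ C)
    (hres : Tendsto (fun i => ‖y i - V (y i)‖) l (𝓝 0))
    (hweak : Tendsto (fun i => toWeakSpace ℝ H (y i)) l (𝓝 (toWeakSpace ℝ H p))) :
    IsFixedPt V p := by
  set w := p - V p
  set D := Metric.diam C
  have hbound : ∀ i,
      ‖w‖ ^ 2 + 2 * ⟪y i - p, w⟫ ≤ ‖y i - V (y i)‖ * (‖y i - V (y i)‖ + 2 * D) := by
    intro i
    have hlip : ‖V (y i) - V p‖ ≤ ‖y i - p‖ := by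
      simpa [dist_eq_norm] using hV.dist_le_mul _ (hy i) _ hp
    have hdiam : ‖y i - p‖ ≤ D := by
      simpa [dist_eq_norm] using Metric.dist_le_diam_of_mem hCb (hy i) hp
    have htri : ‖y i - V p‖ ≤ ‖y i - V (y i)‖ + ‖y i - p‖ := by
      calc ‖y i - V p‖ = ‖(y i - V (y i)) + (V (y i) - V p)‖ := by congr 1; abel
        _ ≤ ‖y i - V (y i)‖ + ‖V (y i) - V p‖ := norm_add_le _ _
        _ ≤ ‖y i - V (y i)‖ + ‖y i - p‖ := by gcongr
    have hexp : ‖y i - V p‖ ^ 2 = ‖y i - p‖ ^ 2 + 2 * ⟪y i - p, w⟫ + ‖w‖ ^ 2 := by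
      rw [← norm_add_sq_real, sub_add_sub_cancel]
    nlinarith [norm_nonneg (y i - V p), norm_nonneg (y i - V (y i)), norm_nonneg (y i - p)]
  have hlhs : Tendsto (fun i => ‖w‖ ^ 2 + 2 * ⟪y i - p, w⟫) l (𝓝 (‖w‖ ^ 2 + 2 * 0)) := by
    simp_rw [inner_sub_left]
    refine tendsto_const_nhds.add (tendsto_const_nhds.mul ?_)
    simpa using (tendsto_inner_of_tendsto_toWeakSpace hweak w).sub_const ⟪p, w⟫
  have hrhs : Tendsto (fun i => ‖y i - V (y i)‖ * (‖y i - V (y i)‖ + 2 * D)) l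
      (𝓝 (0 * (0 + 2 * D))) :=
    hres.mul (hres.add_const _)
  have hw : ‖w‖ ^ 2 ≤ 0 := by
    simpa using le_of_tendsto_of_tendsto' hlhs hrhs hbound
  have : w = 0 := by simpa using hw
  exact (sub_eq_zero.1 this).symm

lemma LipschitzOnWith.mem_isFixedPt_of_mapClusterPt {ι : Type*} {l : Filter ι}
    {V : H → H} {C : Set H} (hV : LipschitzOnWith 1 V C) (hC : Convex ℝ C)
    (hCb : Bornology.IsBounded C) (hCc : IsClosed C) {y : ι → H} (hy : ∀ i, y i ∈ C) {p : H}
    (hres : Tendsto (fun i => ‖y i - V (y i)‖) l (𝓝 0))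
    (hp : MapClusterPt (toWeakSpace ℝ H p) l fun i => toWeakSpace ℝ H (y i)) :
    p ∈ C ∧ IsFixedPt V p := by
  obtain ⟨U, hUl, hU⟩ := mapClusterPt_iff_ultrafilter.1 hp
  have hpC : p ∈ C := (toWeakSpace ℝ H).injective.mem_set_image.1 <|
    (hC.isClosed_toWeakSpace_image hCc).mem_of_tendsto hU
      (Eventually.of_forall fun i => mem_image_of_mem _ (hy i))
  exact ⟨hpC, hV.isFixedPt_of_tendsto_toWeakSpace hCb hy hpC (hres.mono_left hUl) hU⟩

lemma isFixedPt_smul_add_smul_iff {T : H → H} {γ : ℝ} (hγ : γ ≠ 0) {p : H} :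
    IsFixedPt (fun z => (1 - γ) • z + γ • T z) p ↔ T p = p := by
  rw [IsFixedPt, ← sub_eq_zero, show (1 - γ) • p + γ • T p - p = γ • (T p - p) by module,
    smul_eq_zero, sub_eq_zero, or_iff_right hγ]

def StrictPseudocontractiveOn (κ : ℝ) (T : H → H) (C : Set H) : Prop :=
  ∀ x ∈ C, ∀ y ∈ C, ‖T x - T y‖ ^ 2 ≤ ‖x - y‖ ^ 2 + κ * ‖x - y - (T x - T y)‖ ^ 2

lemma strictPseudocontractiveOn_iff_inner {κ : ℝ} {T : H → H} {C : Set H} :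
    StrictPseudocontractiveOn κ T C ↔ ∀ x ∈ C, ∀ y ∈ C,
      (1 - κ) * ‖x - y - (T x - T y)‖ ^ 2 ≤ 2 * ⟪x - y, x - y - (T x - T y)⟫ := by
  refine forall₂_congr fun x _ => forall₂_congr fun y _ => ?_
  rw [show T x - T y = (x - y) - (x - y - (T x - T y)) by abel, norm_sub_sq_real,
    sub_sub_cancel]
  constructor <;> intro h <;> linarith

lemma StrictPseudocontractiveOn.of_enriched {T : H → H} {C : Set H} {b k : ℝ} (hb : 0 < b + 1)
    (h : ∀ x ∈ C, ∀ y ∈ C, ‖b • (x - y) + (T x - T y)‖ ^ 2 ≤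
      (b + 1) ^ 2 * ‖x - y‖ ^ 2 + k * ‖x - y - (T x - T y)‖ ^ 2) :
    StrictPseudocontractiveOn ((b + k) / (b + 1)) T C := by
  refine strictPseudocontractiveOn_iff_inner.2 fun x hx y hy => ?_
  set A := x - y - (T x - T y)
  have h' := h x hx y hy
  rw [show b • (x - y) + (T x - T y) = (b + 1) • (x - y) - A by simp only [A]; module,
    norm_sub_sq_real, real_inner_smul_left, norm_smul, Real.norm_of_nonneg hb.le, mul_pow] at h'
  rw [show 1 - (b + k) / (b + 1) = (1 - k) / (b + 1) by field_simp; ring, div_mul_eq_mul_div,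
    div_le_iff₀ hb]
  linarith

namespace StrictPseudocontractiveOn

variable {κ γ : ℝ} {T : H → H} {C : Set H}

lemma norm_sub_sq_le (hT : StrictPseudocontractiveOn κ T C) (hγ : 0 ≤ γ) {x y : H} (hx : x ∈ C)
    (hy : y ∈ C) :
    ‖((1 - γ) • x + γ • T x) - ((1 - γ) • y + γ • T y)‖ ^ 2 ≤
      ‖x - y‖ ^ 2 - γ * (1 - κ - γ) * ‖x - y - (T x - T y)‖ ^ 2 := by
  rw [show ((1 - γ) • x + γ • T x) - ((1 - γ) • y + γ • T y) =
      (x - y) - γ • (x - y - (T x - T y)) by module, norm_sub_sq_real, real_inner_smul_right,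
    norm_smul, Real.norm_of_nonneg hγ, mul_pow]
  nlinarith [strictPseudocontractiveOn_iff_inner.1 hT x hx y hy]

lemma lipschitzOnWith_one (hT : StrictPseudocontractiveOn κ T C) (hγ0 : 0 ≤ γ)
    (hγ : γ ≤ 1 - κ) : LipschitzOnWith 1 (fun z => (1 - γ) • z + γ • T z) C := by
  refine LipschitzOnWith.mk_one fun x hx y hy => ?_
  rw [dist_eq_norm, dist_eq_norm,
    ← pow_le_pow_iff_left₀ (norm_nonneg _) (norm_nonneg _) two_ne_zero]
  have hgap : 0 ≤ γ * (1 - κ - γ) * ‖x - y - (T x - T y)‖ ^ 2 :=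
    mul_nonneg (mul_nonneg hγ0 (by linarith)) (sq_nonneg _)
  linarith [hT.norm_sub_sq_le hγ0 hx hy]

lemma tendsto_norm_sub_apply_zero (hT : StrictPseudocontractiveOn κ T C) (hγ0 : 0 < γ)
    (hγ : γ < 1 - κ) {x : ℕ → H} (hx : ∀ n, x n ∈ C)
    (hrec : ∀ n, x (n + 1) = (1 - γ) • x n + γ • T (x n)) {p : H} (hp : p ∈ C) (hTp : T p = p) :
    Tendsto (fun n => ‖x n - T (x n)‖) atTop (𝓝 0) := by
  have hdecr : ∀ n, ‖x (n + 1) - p‖ ^ 2 + γ * (1 - κ - γ) * ‖x n - T (x n)‖ ^ 2 ≤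
      ‖x n - p‖ ^ 2 := by
    intro n
    have h := hT.norm_sub_sq_le hγ0.le (hx n) hp
    rw [hTp, show (1 - γ) • p + γ • p = p by module, ← hrec,
      show x n - p - (T (x n) - p) = x n - T (x n) by abel] at h
    linarith
  have hsq := tendsto_zero_of_add_mul_le (a := fun n => ‖x n - p‖ ^ 2)
    (r := fun n => ‖x n - T (x n)‖ ^ 2) (mul_pos hγ0 (show 0 < 1 - κ - γ by linarith))
    (fun n => sq_nonneg _) (fun n => sq_nonneg _) hdecr
  simpa [Real.sqrt_sq (norm_nonneg _)] using hsq.sqrt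

end StrictPseudocontractiveOn

variable [CompleteSpace H]

lemma continuous_toWeakSpace_toDual_symm :
    Continuous fun f : WeakDual ℝ H =>
      toWeakSpace ℝ H ((InnerProductSpace.toDual ℝ H).symm (WeakDual.toStrongDual f)) := by
  refine WeakBilin.continuous_of_continuous_eval _ fun l => ?_
  obtain ⟨w, rfl⟩ := (InnerProductSpace.toDual ℝ H).surjective l
  have h : (fun f : WeakDual ℝ H => (topDualPairing ℝ H).flip
      (toWeakSpace ℝ H ((InnerProductSpace.toDual ℝ H).symm (WeakDual.toStrongDual f)))
      (InnerProductSpace.toDual ℝ H w)) = fun f => f w := by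
    funext f
    change ⟪w, (InnerProductSpace.toDual ℝ H).symm (WeakDual.toStrongDual f)⟫ = _
    rw [real_inner_comm, ← InnerProductSpace.toDual_apply_apply,
      LinearIsometryEquiv.apply_symm_apply]
    rfl
  rw [h]
  exact WeakDual.eval_continuous w

lemma Convex.isCompact_toWeakSpace_image {C : Set H} (hC : Convex ℝ C)
    (hCb : Bornology.IsBounded C) (hCc : IsClosed C) :
    IsCompact (toWeakSpace ℝ H '' C) := by
  obtain ⟨R, hR⟩ := hCb.subset_closedBall 0
  refine ((WeakDual.isCompact_closedBall 0 R).image continuous_toWeakSpace_toDual_symm)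
    |>.of_isClosed_subset (hC.isClosed_toWeakSpace_image hCc) ?_
  rintro _ ⟨c, hc, rfl⟩
  refine ⟨StrongDual.toWeakDual (InnerProductSpace.toDual ℝ H c), ?_, ?_⟩
  · simpa using hR hc
  · simp

lemma LipschitzOnWith.exists_mem_eq_smul_add_smul {V : H → H} {C : Set H}
    (hV : LipschitzOnWith 1 V C) (hVC : MapsTo V C C) (hC : Convex ℝ C) (hCc : IsClosed C)
    {u : H} (hu : u ∈ C) {θ : ℝ} (hθ0 : 0 < θ) (hθ1 : θ ≤ 1) :
    ∃ z ∈ C, z = θ • u + (1 - θ) • V z := by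
  set f : H → H := fun z => θ • u + (1 - θ) • V z
  have hfC : MapsTo f C C := fun z hz => hC hu (hVC hz) hθ0.le (by linarith) (by ring)
  have hlip : LipschitzOnWith (Real.toNNReal (1 - θ)) f C := by
    refine LipschitzOnWith.of_dist_le' fun a ha c hc => ?_
    have hVac := hV.dist_le_mul a ha c hc
    simp only [NNReal.coe_one, one_mul] at hVac
    calc dist (f a) (f c) = (1 - θ) * dist (V a) (V c) := by
          simp only [f, dist_add_left, dist_smul₀, Real.norm_of_nonneg (by linarith : 0 ≤ 1 - θ)]
      _ ≤ (1 - θ) * dist a c := by gcongr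
  have hcontr : ContractingWith (Real.toNNReal (1 - θ)) (hfC.restrict f C C) :=
    ⟨by rw [Real.toNNReal_lt_one]; linarith, hfC.lipschitzOnWith_iff_restrict.1 hlip⟩
  obtain ⟨z, hzC, hz, -⟩ := hcontr.exists_fixedPoint' hCc.isComplete hfC hu (edist_ne_top _ _)
  exact ⟨z, hzC, hz.symm⟩

/-- Browder's fixed point theorem. -/
theorem LipschitzOnWith.exists_mem_isFixedPt {V : H → H} {C : Set H}
    (hV : LipschitzOnWith 1 V C) (hVC : MapsTo V C C) (hC : Convex ℝ C)
    (hCb : Bornology.IsBounded C) (hCc : IsClosed C) (hCne : C.Nonempty) :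
    ∃ p ∈ C, IsFixedPt V p := by
  obtain ⟨u, hu⟩ := hCne
  choose z hzC hz using fun n : ℕ =>
    hV.exists_mem_eq_smul_add_smul hVC hC hCc hu (θ := 1 / (n + 1)) (by positivity)
      (div_le_one_of_le₀ (by simp) (by positivity))
  have hres : Tendsto (fun n => ‖z n - V (z n)‖) atTop (𝓝 0) := by
    refine squeeze_zero (g := fun n : ℕ => 1 / ((n : ℝ) + 1) * Metric.diam C)
      (fun n => norm_nonneg _) (fun n => ?_)
      (by simpa using tendsto_one_div_add_atTop_nhds_zero_nat.mul_const (Metric.diam C))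
    have hzn : z n - V (z n) = (1 / (n + 1) : ℝ) • (u - V (z n)) := by
      nth_rw 1 [hz n]
      module
    rw [hzn, norm_smul, Real.norm_of_nonneg (by positivity), ← dist_eq_norm]
    gcongr
    exact Metric.dist_le_diam_of_mem hCb hu (hVC (hzC n))
  obtain ⟨_, ⟨p, -, rfl⟩, hp⟩ :=
    (hC.isCompact_toWeakSpace_image hCb hCc).exists_mapClusterPt (f := atTop)
      (tendsto_principal.2 (Eventually.of_forall fun n => mem_image_of_mem _ (hzC n)))
  exact ⟨p, hV.mem_isFixedPt_of_mapClusterPt hC hCb hCc hzC hres hp⟩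

namespace StrictPseudocontractiveOn

variable {κ γ : ℝ} {T : H → H} {C : Set H}

theorem exists_fixedPoint (hT : StrictPseudocontractiveOn κ T C) (hκ0 : 0 ≤ κ) (hκ1 : κ < 1)
    (hTC : MapsTo T C C) (hC : Convex ℝ C) (hCb : Bornology.IsBounded C) (hCc : IsClosed C)
    (hCne : C.Nonempty) : ∃ p ∈ C, T p = p := by
  have hVC : MapsTo (fun z => (1 - (1 - κ)) • z + (1 - κ) • T z) C C :=
    fun z hz => hC hz (hTC hz) (by linarith) (by linarith) (by ring)
  obtain ⟨p, hpC, hp⟩ := (hT.lipschitzOnWith_one (by linarith) le_rfl).exists_mem_isFixedPt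
    hVC hC hCb hCc hCne
  exact ⟨p, hpC, (isFixedPt_smul_add_smul_iff (by linarith)).1 hp⟩

theorem exists_tendsto_toWeakSpace_krasnoselskij (hT : StrictPseudocontractiveOn κ T C)
    (hκ0 : 0 ≤ κ) (hTC : MapsTo T C C) (hC : Convex ℝ C) (hCb : Bornology.IsBounded C)
    (hCc : IsClosed C) (hγ0 : 0 < γ) (hγ : γ < 1 - κ) {x : ℕ → H} (hx0 : x 0 ∈ C)
    (hrec : ∀ n, x (n + 1) = (1 - γ) • x n + γ • T (x n)) :
    ∃ q ∈ C, T q = q ∧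
      Tendsto (fun n => toWeakSpace ℝ H (x n)) atTop (𝓝 (toWeakSpace ℝ H q)) := by
  set V := fun z => (1 - γ) • z + γ • T z
  have hV : LipschitzOnWith 1 V C := hT.lipschitzOnWith_one hγ0.le hγ.le
  have hVC : MapsTo V C C := fun z hz => hC hz (hTC hz) (by linarith) hγ0.le (by ring)
  have hx : ∀ n, x n ∈ C := fun n => by
    induction n with
    | zero => exact hx0
    | succ n ih => exact hrec n ▸ hVC ih
  obtain ⟨p, hpC, hTp⟩ := hT.exists_fixedPoint hκ0 (by linarith) hTC hC hCb hCc ⟨_, hx0⟩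
  have hres : Tendsto (fun n => ‖x n - V (x n)‖) atTop (𝓝 0) := by
    have hnorm : ∀ n, ‖x n - V (x n)‖ = γ * ‖x n - T (x n)‖ := fun n => by
      rw [show x n - V (x n) = γ • (x n - T (x n)) by simp only [V]; module, norm_smul,
        Real.norm_of_nonneg hγ0.le]
    simpa [hnorm] using (hT.tendsto_norm_sub_apply_zero hγ0 hγ hx hrec hpC hTp).const_mul γ
  obtain ⟨q, ⟨hqC, hTq⟩, hq⟩ := exists_tendsto_toWeakSpace_of_antitone_norm_sub
    (hC.isCompact_toWeakSpace_image hCb hCc) hx (S := {q | q ∈ C ∧ T q = q})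
    (fun q ⟨hqC, hTq⟩ => antitone_nat_of_succ_le fun n => by
      have hVq : V q = q := (isFixedPt_smul_add_smul_iff hγ0.ne').2 hTq
      simpa [dist_eq_norm, hrec, hVq] using hV.dist_le_mul _ (hx n) _ hqC)
    (fun p hp => by
      obtain ⟨hpC, hVp⟩ := hV.mem_isFixedPt_of_mapClusterPt hC hCb hCc hx hres hp
      exact ⟨hpC, (isFixedPt_smul_add_smul_iff hγ0.ne').1 hVp⟩)
  exact ⟨q, hqC, hTq, hq⟩

end StrictPseudocontractiveOn

end

theorem enriched_krasnoselskij_weak_convergence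
    {H : Type*} [NormedAddCommGroup H] [InnerProductSpace ℝ H] [CompleteSpace H]
    (C : Set H) (hCb : Bornology.IsBounded C) (hCc : IsClosed C) (hC : Convex ℝ C)
    (hCne : C.Nonempty)
    (T : H → H) (hT : Set.MapsTo T C C)
    (b k : ℝ) (hb : 0 ≤ b) (hk0 : 0 ≤ k) (hk1 : k < 1)
    (hespc : ∀ x ∈ C, ∀ y ∈ C,
      ‖b • (x - y) + (T x - T y)‖ ^ 2 ≤
        (b + 1) ^ 2 * ‖x - y‖ ^ 2 + k * ‖x - y - (T x - T y)‖ ^ 2) :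
    (∃ p ∈ C, T p = p) ∧
      ∀ (γ μ t : ℝ), 0 < μ → μ < 1 → 0 < t → t < 1 - k →
        γ = (1 / (b + 1)) * μ * t →
        ∀ (x : ℕ → H), x 0 ∈ C →
          (∀ n, x (n + 1) = (1 - γ) • x n + γ • T (x n)) →
          ∃ q ∈ C, T q = q ∧
            ∀ w : H, Tendsto (fun n => ⟪x n, w⟫) atTop (𝓝 ⟪q, w⟫) := by
  have hb1 : 0 < b + 1 := by linarith
  have hspc := StrictPseudocontractiveOn.of_enriched hb1 hespc
  have hκ0 : 0 ≤ (b + k) / (b + 1) := by positivity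
  have hκ : 1 - (b + k) / (b + 1) = (1 - k) / (b + 1) := by field_simp; ring
  refine ⟨hspc.exists_fixedPoint hκ0 ((div_lt_one hb1).2 (by linarith)) hT hC hCb hCc hCne, ?_⟩
  intro γ μ t hμ0 hμ1 ht0 ht1 hγ x hx0 hrec
  have hγ0 : 0 < γ := by rw [hγ]; positivity
  have hγκ : γ < 1 - (b + k) / (b + 1) := by
    rw [hκ, hγ, one_div_mul_eq_div, div_mul_eq_mul_div]
    exact div_lt_div_of_pos_right (by nlinarith) hb1
  obtain ⟨q, hqC, hTq, hq⟩ :=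
    hspc.exists_tendsto_toWeakSpace_krasnoselskij hκ0 hT hC hCb hCc hγ0 hγκ hx0 hrec
  exact ⟨q, hqC, hTq, tendsto_inner_of_tendsto_toWeakSpace hq⟩
end
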